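/- arXiv:math/9907136 — 4 statements merged into one kernel-verified Lean document; each statement's English description precedes it below -/
import Mathlib

section
/- Let Q be a finite quiver, θ ∈ ℤ^k, and m ∈ rep_Q(α) a representation such that det(M_σ(m)) ≠ 0 for some morphism σ : ⊕_{θ_i>0} P_i^{⊕zθ_i} → ⊕_{θ_j<0} P_j^{⊕−zθ_j} of projective ℂQ-modules (for some z ≥ 1). Then m is θ-semistable. -/
/-! If `N ⊆ m` is a subrepresentation, every entry of `M_σ(m)` is a combination of path
evaluations, which preserve `N`; so `M_σ(m)` maps `⊕_{θⱼ<0} Nⱼ^{⊕ -zθⱼ}` into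
`⊕_{θᵢ>0} Nᵢ^{⊕ zθᵢ}`. As `M_σ(m)` is invertible this restriction is injective, which gives
`z θ(N) ≥ 0`, while squareness of `M_σ(m)` gives `z θ(m) = 0`. -/

open Quiver

structure QRep (V : Type) [Quiver.{1} V] where
  carrier : V → Type
  [acg : ∀ i, AddCommGroup (carrier i)]
  [mod : ∀ i, Module ℂ (carrier i)]
  map : ∀ {i j : V}, (i ⟶ j) → (carrier i →ₗ[ℂ] carrier j)

attribute [instance] QRep.acg QRep.mod

variable {V : Type} [Quiver.{1} V]

structure SubRep (M : QRep V) where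
  N : ∀ i, Submodule ℂ (M.carrier i)
  compat : ∀ {i j : V} (a : i ⟶ j), ∀ x ∈ N i, M.map a x ∈ N j

noncomputable def QRep.θnum [Fintype V] (θ : V → ℤ) (M : QRep V) : ℤ :=
  ∑ i, θ i * (Module.finrank ℂ (M.carrier i) : ℤ)

noncomputable def SubRep.θnum [Fintype V] {M : QRep V} (θ : V → ℤ) (N : SubRep M) : ℤ :=
  ∑ i, θ i * (Module.finrank ℂ ↥(N.N i) : ℤ)

def QRep.Semistable [Fintype V] (θ : V → ℤ) (M : QRep V) : Prop :=
  M.θnum θ = 0 ∧ ∀ N : SubRep M, 0 ≤ N.θnum θ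

def QRep.Stable [Fintype V] (θ : V → ℤ) (M : QRep V) : Prop :=
  M.Semistable θ ∧ (∃ i, Nontrivial (M.carrier i)) ∧
    ∀ N : SubRep M, N.θnum θ = 0 → (∀ i, N.N i = ⊥) ∨ (∀ i, N.N i = ⊤)

/-- The representation space of a quiver for a dimension vector α. -/
abbrev MRep (V : Type) [Quiver.{1} V] (α : V → ℕ) :=
  ∀ (i j : V), (i ⟶ j) → Matrix (Fin (α j)) (Fin (α i)) ℂ

/-- Evaluation of an oriented path at a representation: the product of the matrices
attached to the arrows of the path. -/
noncomputable def evalPath {V : Type} [Quiver.{1} V] {α : V → ℕ} (m : MRep V α) :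
    ∀ {x y : V}, Quiver.Path x y → Matrix (Fin (α y)) (Fin (α x)) ℂ
  | _, _, Quiver.Path.nil => 1
  | _, _, Quiver.Path.cons p a => m _ _ a * evalPath m p

/-- Evaluation of a ℂ-linear combination of paths (with fixed endpoints) at a
representation. -/
noncomputable def evalComb {V : Type} [Quiver.{1} V] {α : V → ℕ} (m : MRep V α) {x y : V}
    (c : Quiver.Path x y →₀ ℂ) : Matrix (Fin (α y)) (Fin (α x)) ℂ :=
  c.sum fun p coeff => coeff • evalPath m p

/-- A morphism σ : ⊕ᵢ Pᵢ^{⊕ e i} → ⊕ⱼ Pⱼ^{⊕ f j} of projective left ℂQ-modules is given by a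
matrix of linear combinations of paths; `evalσ σ m` is the matrix M_σ(m) obtained by
substituting the matrices of the representation m along each path. -/
noncomputable def evalσ {V : Type} [Quiver.{1} V] {α : V → ℕ} (e f : V → ℕ)
    (σ : ∀ (p : Σ i : V, Fin (e i)) (q : Σ j : V, Fin (f j)), Quiver.Path q.1 p.1 →₀ ℂ)
    (m : MRep V α) :
    Matrix ((p : Σ i : V, Fin (e i)) × Fin (α p.1)) ((q : Σ j : V, Fin (f j)) × Fin (α q.1)) ℂ :=
  fun r c => evalComb m (σ r.1 c.1) r.2 c.2

/-- A representation in matrix form, viewed as a representation by vector spaces. -/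
noncomputable def MRep.toQRep {V : Type} [Quiver.{1} V] {α : V → ℕ} (m : MRep V α) : QRep V where
  carrier i := Fin (α i) → ℂ
  map {i j} a := Matrix.mulVecLin (m i j a)

open Module Matrix

namespace Submodule

variable {R ι : Type*} {φ : ι → Type*}

def piUnivEquiv [Semiring R] [∀ i, AddCommMonoid (φ i)] [∀ i, Module R (φ i)]
    (p : ∀ i, Submodule R (φ i)) : pi Set.univ p ≃ₗ[R] ∀ i, p i where
  toFun v i := ⟨v.1 i, v.2 i trivial⟩
  invFun w := ⟨fun i => w i, fun i _ => (w i).2⟩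
  map_add' _ _ := rfl
  map_smul' _ _ := rfl
  left_inv _ := rfl
  right_inv _ := rfl

theorem finrank_pi_univ [DivisionRing R] [Fintype ι] [∀ i, AddCommGroup (φ i)]
    [∀ i, Module R (φ i)] [∀ i, FiniteDimensional R (φ i)] (p : ∀ i, Submodule R (φ i)) :
    finrank R (pi Set.univ p) = ∑ i, finrank R (p i) := by
  rw [(piUnivEquiv p).finrank_eq, finrank_pi_fintype]

end Submodule

theorem Matrix.mulVec_injective_of_det_submatrix_ne_zero {K m n : Type*} [Field K] [Fintype m]
    [DecidableEq m] [Fintype n] {A : Matrix m n K} {e : n ≃ m}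
    (hA : (A.submatrix id e.symm).det ≠ 0) : Function.Injective A.mulVec := by
  have hB : Function.Injective (A.submatrix id e.symm).mulVec :=
    mulVec_injective_iff_isUnit.2 ((isUnit_iff_isUnit_det _).2 hA.isUnit)
  have hAB : ∀ w, A.submatrix id e.symm *ᵥ (w ∘ e.symm) = A *ᵥ w := fun w => by
    rw [submatrix_mulVec_equiv]
    simp [Function.comp_def]
  intro u v huv
  exact e.symm.surjective.injective_comp_right (hB (by rw [hAB, hAB, huv]))

theorem Fintype.sum_sigma_fin_fst {V M : Type*} [Fintype V] [AddCommMonoid M] (n : V → ℕ)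
    (g : V → M) : ∑ q : Σ j, Fin (n j), g q.1 = ∑ j, n j • g j := by
  simp [Fintype.sum_sigma]

theorem Int.natCast_mul_sum_eq_toNat_sub_toNat {V : Type*} [Fintype V] (θ : V → ℤ) (z : ℕ)
    (d : V → ℕ) : (z : ℤ) * ∑ i, θ i * d i =
      ((∑ i, z * (θ i).toNat * d i : ℕ) : ℤ) - ((∑ i, z * (-θ i).toNat * d i : ℕ) : ℤ) := by
  push_cast
  rw [Finset.mul_sum, ← Finset.sum_sub_distrib]
  refine Finset.sum_congr rfl fun i _ => ?_
  linear_combination (z * d i : ℤ) * ((θ i).toNat_sub_toNat_neg).symm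

variable {α : V → ℕ}

theorem MRep.θnum_toQRep [Fintype V] (θ : V → ℤ) (m : MRep V α) :
    m.toQRep.θnum θ = ∑ i, θ i * α i := by
  refine Finset.sum_congr rfl fun i _ => ?_
  congr 2
  exact finrank_fin_fun ℂ

namespace SubRep

variable {m : MRep V α} (N : SubRep m.toQRep)

theorem evalPath_mulVec_mem {x y : V} (p : Path x y) {v : Fin (α x) → ℂ} (hv : v ∈ N.N x) :
    evalPath m p *ᵥ v ∈ N.N y := by
  induction p with
  | nil => simpa [evalPath] using hv
  | cons p a ih =>
    rw [evalPath, ← mulVec_mulVec]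
    exact N.compat a _ ih

theorem evalComb_mulVec_mem {x y : V} (c : Path x y →₀ ℂ) {v : Fin (α x) → ℂ}
    (hv : v ∈ N.N x) : evalComb m c *ᵥ v ∈ N.N y := by
  rw [evalComb, Finsupp.sum, sum_mulVec]
  exact Submodule.sum_mem _ fun p _ => by
    rw [smul_mulVec]
    exact (N.N y).smul_mem _ (N.evalPath_mulVec_mem p hv)

/-- The subspace `⊕ⱼ Nⱼ^{⊕ f j}` of the space `⊕ⱼ (ℂ^{α j})^{⊕ f j}` on which `evalσ` acts. -/
noncomputable def blocks (f : V → ℕ) : Submodule ℂ ((Σ q : Σ j, Fin (f j), Fin (α q.1)) → ℂ) :=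
  (Submodule.pi Set.univ fun q => N.N q.1).comap
    (LinearEquiv.piCurry ℂ fun (q : Σ j, Fin (f j)) (_ : Fin (α q.1)) => ℂ).toLinearMap

theorem mem_blocks {f : V → ℕ} {v : (Σ q : Σ j, Fin (f j), Fin (α q.1)) → ℂ} :
    v ∈ N.blocks f ↔ ∀ q : Σ j, Fin (f j), (fun k => v ⟨q, k⟩) ∈ N.N q.1 :=
  ⟨fun hv q => hv q trivial, fun hv q _ => hv q⟩

theorem finrank_blocks [Fintype V] (f : V → ℕ) :
    finrank ℂ (N.blocks f) = ∑ j, f j * finrank ℂ (N.N j) := by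
  rw [blocks, Submodule.comap_equiv_eq_map_symm, LinearEquiv.finrank_map_eq]
  exact (Submodule.finrank_pi_univ _).trans
    (Fintype.sum_sigma_fin_fst f fun j => finrank ℂ (N.N j))

theorem evalσ_mulVec_mem_blocks [Fintype V] {e f : V → ℕ}
    (σ : ∀ (p : Σ i, Fin (e i)) (q : Σ j, Fin (f j)), Path q.1 p.1 →₀ ℂ)
    {v : (Σ q : Σ j, Fin (f j), Fin (α q.1)) → ℂ} (hv : v ∈ N.blocks f) :
    evalσ e f σ m *ᵥ v ∈ N.blocks e := by
  have hblock : ∀ p, (fun a => (evalσ e f σ m *ᵥ v) ⟨p, a⟩) =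
      ∑ q, evalComb m (σ p q) *ᵥ fun k => v ⟨q, k⟩ := fun p => by
    ext a
    simp only [mulVec, dotProduct, Finset.sum_apply, Fintype.sum_sigma]
    rfl
  rw [mem_blocks] at hv ⊢
  intro p
  rw [hblock]
  exact Submodule.sum_mem _ fun q _ => N.evalComb_mulVec_mem (σ p q) (hv q)

theorem finrank_blocks_le [Fintype V] {e f : V → ℕ}
    {σ : ∀ (p : Σ i, Fin (e i)) (q : Σ j, Fin (f j)), Path q.1 p.1 →₀ ℂ}
    (hσ : Function.Injective (evalσ e f σ m).mulVec) :
    finrank ℂ (N.blocks f) ≤ finrank ℂ (N.blocks e) :=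
  LinearMap.finrank_le_finrank_of_injective
    (f := (mulVecLin (evalσ e f σ m)).restrict fun _ => N.evalσ_mulVec_mem_blocks σ)
    fun _ _ h => Subtype.ext (hσ (congrArg Subtype.val h))

end SubRep

/-- if for some z ≥ 1 and some morphism
σ : ⊕_{θᵢ>0} Pᵢ^{⊕zθᵢ} → ⊕_{θⱼ<0} Pⱼ^{⊕−zθⱼ} of projective ℂQ-modules the evaluation
M_σ(m) is square (witnessed by ε) with nonzero determinant, then m is θ-semistable. -/
theorem nonvanishing_semiinvariant_implies_semistable {V : Type} [Quiver.{1} V] [Fintype V]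
    [DecidableEq V] (α : V → ℕ) (θ : V → ℤ) (z : ℕ) (hz : 1 ≤ z)
    (σ : ∀ (p : Σ i : V, Fin (z * (θ i).toNat)) (q : Σ j : V, Fin (z * (-θ j).toNat)),
      Quiver.Path q.1 p.1 →₀ ℂ)
    (m : MRep V α)
    (ε : ((q : Σ j : V, Fin (z * (-θ j).toNat)) × Fin (α q.1)) ≃
      ((p : Σ i : V, Fin (z * (θ i).toNat)) × Fin (α p.1)))
    (hdet : ((evalσ (fun i => z * (θ i).toNat) (fun j => z * (-θ j).toNat) σ m).submatrix
      id ε.symm).det ≠ 0) :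
    m.toQRep.Semistable θ := by
  have hσ := mulVec_injective_of_det_submatrix_ne_zero hdet
  have hz₀ : (0 : ℤ) < z := by exact_mod_cast hz
  refine ⟨?_, fun N => ?_⟩
  · have hcard := Fintype.card_congr ε
    simp only [Fintype.card_sigma, Fintype.card_fin, Fintype.sum_sigma_fin_fst, smul_eq_mul]
      at hcard
    have h := Int.natCast_mul_sum_eq_toNat_sub_toNat θ z α
    rw [hcard, sub_self, ← MRep.θnum_toQRep] at h
    exact (mul_eq_zero.1 h).resolve_left hz₀.ne'
  · have hle := N.finrank_blocks_le hσ
    rw [SubRep.finrank_blocks, SubRep.finrank_blocks] at hle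
    have h := Int.natCast_mul_sum_eq_toNat_sub_toNat θ z fun i => finrank ℂ (N.N i)
    rw [← SubRep.θnum] at h
    exact (mul_nonneg_iff_of_pos_left hz₀).1 (h ▸ sub_nonneg.2 (by exact_mod_cast hle))
end

section
/- Let A be a ℂ-algebra with the lifting property for algebra morphisms modulo nilpotent ideals (quasi-free/formally smooth): for every ℂ-algebra B with nilpotent two-sided ideal I ⊆ B and every algebra map f : A → B/I, there exists an algebra map g : A → B lifting f. Then for any n, the matrix algebra M_n(A) also has this lifting property. -/
/-!
The images `uᵢⱼ = f Eᵢⱼ` form a full system of matrix units of `C`, and it lifts to one of `B`: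
lift the idempotents `uᵢᵢ` to orthogonal idempotents `pᵢ`, lift `u_iz` to `xᵢ ∈ pᵢ B p_z` and
`u_zi` to `yᵢ ∈ p_z B pᵢ`, and replace `yᵢ` by `c yᵢ` where `c yᵢ xᵢ = p_z`; such a `c` exists
because `yᵢ xᵢ - p_z` is nilpotent. Then `eᵢⱼ = xᵢ yⱼ`. Averaging `b ↦ ∑ₖ e_kz b e_zk` shows
that `π` maps the centralizer of the `eᵢⱼ` onto the centralizer of the `uᵢⱼ`, again with
nilpotent kernel, and `f` sends the scalar matrices into the latter. The lifting property of `A`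
then gives `g₀` from `A` to the centralizer of the `eᵢⱼ` lifting `a ↦ f (a • 1)`, and
`X ↦ ∑ᵢⱼ g₀ (Xᵢⱼ) eᵢⱼ` lifts `f`.
-/

open Function

section NilpotentKer

variable {B C : Type*} [Semiring B] [Semiring C]

def HasNilpotentKer {F : Type*} [FunLike F B C] (π : F) : Prop :=
  ∃ m : ℕ, ∀ x : Fin m → B, (∀ i, π (x i) = 0) → (List.ofFn x).prod = 0

theorem HasNilpotentKer.isNilpotent {F : Type*} [FunLike F B C] [RingHomClass F B C] {π : F}
    (h : HasNilpotentKer π) : ∀ x ∈ RingHom.ker π, IsNilpotent x := by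
  obtain ⟨m, hm⟩ := h
  exact fun x hx => ⟨m, by simpa using hm (fun _ => x) (fun _ => hx)⟩

theorem HasNilpotentKer.codRestrict {R : Type*} [CommSemiring R] [Algebra R B] [Algebra R C]
    {π : B →ₐ[R] C} (h : HasNilpotentKer π) (S : Subalgebra R B) (T : Subalgebra R C)
    (hST : ∀ x : S, π x ∈ T) : HasNilpotentKer ((π.comp S.val).codRestrict T hST) := by
  obtain ⟨m, hm⟩ := h
  refine ⟨m, fun x hx => Subtype.ext ?_⟩
  have hprod := map_list_prod S.val (List.ofFn x)
  rw [List.map_ofFn] at hprod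
  exact hprod.trans (hm _ fun i => congrArg Subtype.val (hx i))

end NilpotentKer

section Centralizer

variable {R B C : Type*} [CommSemiring R] [Semiring B] [Semiring C] [Algebra R B] [Algebra R C]

def AlgHom.restrictCentralizer (π : B →ₐ[R] C) (s : Set B) :
    Subalgebra.centralizer R s →ₐ[R] Subalgebra.centralizer R (π '' s) :=
  (π.comp (Subalgebra.centralizer R s).val).codRestrict _ fun x => by
    rintro _ ⟨y, hy, rfl⟩
    simp only [AlgHom.comp_apply, Subalgebra.coe_val, ← map_mul, x.2 y hy]

end Centralizer

theorem exists_mul_eq_of_isNilpotent_sub {B : Type*} [Ring B] {p d : B} (hp : IsIdempotentElem p)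
    (hd : d * p = d) (h : IsNilpotent (d - p)) : ∃ c, c * d = p := by
  obtain ⟨v, hv⟩ := h.isUnit_one_add
  have hvp : ↑v * p = d := by rw [hv, add_mul, one_mul, sub_mul, hd, hp.eq, add_sub_cancel]
  exact ⟨↑v⁻¹, by rw [← hvp, Units.inv_mul_cancel_left]⟩

section Lift

variable {B C F : Type*} [Ring B] [Ring C] [FunLike F B C] [RingHomClass F B C] (π : F)
  (hπ : Surjective π) (hnil : ∀ x ∈ RingHom.ker π, IsNilpotent x)
include hπ hnil

theorem exists_lift_of_mul_eq {P Q : B} (hP : IsIdempotentElem P)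
    (hQ : IsIdempotentElem Q) {v w : C} (hv : π Q * v * π P = v) (hw : π P * w * π Q = w)
    (hwv : w * v = π P) :
    ∃ x y : B, Q * x = x ∧ x * P = x ∧ y * Q = y ∧ y * x = P ∧ π x = v ∧ π y = w := by
  obtain ⟨x₀, hx₀⟩ := hπ v
  obtain ⟨y₀, hy₀⟩ := hπ w
  set x := Q * x₀ * P
  set y := P * y₀ * Q
  have hπx : π x = v := by simp only [x, map_mul, hx₀, hv]
  have hπy : π y = w := by simp only [y, map_mul, hy₀, hw]
  have hyxP : y * x * P = y * x := by simp only [x, mul_assoc, hP.eq]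
  obtain ⟨c, hc⟩ := exists_mul_eq_of_isNilpotent_sub hP hyxP
    (hnil _ (by rw [RingHom.mem_ker, map_sub, map_mul, hπx, hπy, hwv, sub_self]))
  have hPw : π P * w = w := by rw [← hw, ← mul_assoc, ← mul_assoc, ← map_mul, hP.eq]
  refine ⟨x, c * y, by simp only [x, ← mul_assoc, hQ.eq], by simp only [x, mul_assoc, hP.eq],
    by simp only [y, mul_assoc, hQ.eq], by rw [mul_assoc, hc], hπx, ?_⟩
  calc π (c * y) = π c * (π (y * x) * w) := by
        rw [map_mul π c y, map_mul π y x, hπx, hπy, hwv, hPw]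
    _ = π (c * (y * x)) * w := by simp only [map_mul, mul_assoc]
    _ = w := by rw [hc, hPw]

end Lift

section MatrixUnits

variable {ι : Type*} [Fintype ι] [DecidableEq ι]

structure IsMatrixUnits {R : Type*} [Semiring R] (e : ι → ι → R) : Prop where
  mul_eq : ∀ i j k l, e i j * e k l = if j = k then e i l else 0
  sum_eq_one : ∑ i, e i i = 1

theorem Matrix.isMatrixUnits_single (α : Type*) [Semiring α] :
    IsMatrixUnits fun i j : ι => Matrix.single i j (1 : α) where
  mul_eq i j k l := by
    split_ifs with h
    · rw [h, Matrix.single_mul_single_same, one_mul]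
    · exact Matrix.single_mul_single_of_ne _ _ _ _ h _
  sum_eq_one := Matrix.sum_single_one

theorem Matrix.map_eq_sum_scalar_mul_single {α β F : Type*} [Semiring α] [Semiring β]
    [FunLike F (Matrix ι ι α) β] [RingHomClass F (Matrix ι ι α) β] (f : F) (X : Matrix ι ι α) :
    f X = ∑ i, ∑ j, f (Matrix.scalar ι (X i j)) * f (Matrix.single i j 1) := by
  have hsingle (i j : ι) :
      Matrix.scalar ι (X i j) * Matrix.single i j 1 = Matrix.single i j (X i j) := by
    ext k l
    simp [Matrix.diagonal_mul, Matrix.single_apply]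
  simp_rw [← map_mul, hsingle, ← map_sum, ← Matrix.matrix_eq_sum_single]

namespace IsMatrixUnits

section Semiring

variable {R S : Type*} [Semiring R] [Semiring S] {e : ι → ι → R}

theorem map (he : IsMatrixUnits e) {F : Type*} [FunLike F R S] [RingHomClass F R S] (f : F) :
    IsMatrixUnits fun i j => f (e i j) where
  mul_eq i j k l := by rw [← map_mul, he.mul_eq]; split_ifs <;> simp
  sum_eq_one := by rw [← map_sum, he.sum_eq_one, map_one]

theorem completeOrthogonalIdempotents (he : IsMatrixUnits e) :
    CompleteOrthogonalIdempotents fun i => e i i where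
  idem i := by simpa [IsIdempotentElem] using he.mul_eq i i i i
  ortho i j hij := by simpa [hij] using he.mul_eq i i j j
  complete := he.sum_eq_one

theorem of_mul {x y : ι → R} {q : R} (hyx : ∀ j k, y j * x k = if j = k then q else 0)
    (hxq : ∀ i, x i * q = x i) (hsum : ∑ i, x i * y i = 1) :
    IsMatrixUnits fun i j => x i * y j where
  mul_eq i j k l := by
    rw [mul_assoc, ← mul_assoc (y j), hyx]
    split_ifs <;> simp [← mul_assoc, hxq]
  sum_eq_one := hsum

theorem mul_mul_mul_of_commute (he : IsMatrixUnits e) (a : R) {b : R}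
    (hb : ∀ i j, Commute b (e i j)) (i j k l : ι) :
    a * e i j * (b * e k l) = if j = k then a * b * e i l else 0 := by
  rw [mul_assoc, ← mul_assoc (e i j), ← (hb i j).eq, mul_assoc b, he.mul_eq]
  split_ifs <;> simp [mul_assoc]

theorem sum_mul_mul_of_commute (he : IsMatrixUnits e) (z : ι) {c : R}
    (hc : ∀ i j, Commute (e i j) c) : ∑ k, e k z * c * e z k = c := by
  simp [(hc _ _).eq, mul_assoc, he.mul_eq, ← Finset.mul_sum, he.sum_eq_one]

theorem commute_sum_mul_mul (he : IsMatrixUnits e) (z : ι) (b : R) (i j : ι) :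
    Commute (e i j) (∑ k, e k z * b * e z k) :=
  calc e i j * ∑ k, e k z * b * e z k = e i z * b * e z j := by
        simp [Finset.mul_sum, ← mul_assoc, he.mul_eq]
    _ = (∑ k, e k z * b * e z k) * e i j := by simp [Finset.sum_mul, mul_assoc, he.mul_eq]

end Semiring

section Lift

variable {B C F : Type*} [Ring B] [Ring C] [FunLike F B C] [RingHomClass F B C] (π : F)
  (hπ : Surjective π) (hnil : ∀ x ∈ RingHom.ker π, IsNilpotent x)
include hπ hnil

theorem exists_lift {u : ι → ι → C} (hu : IsMatrixUnits u) :
    ∃ e : ι → ι → B, IsMatrixUnits e ∧ ∀ i j, π (e i j) = u i j := by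
  rcases isEmpty_or_nonempty ι with hι | ⟨⟨z⟩⟩
  · obtain ⟨k, hk⟩ : IsNilpotent (1 : B) :=
      hnil 1 (by simpa [RingHom.mem_ker] using hu.sum_eq_one.symm)
    have : Subsingleton B := subsingleton_of_zero_eq_one (by rw [← hk, one_pow])
    exact ⟨0, ⟨isEmptyElim, Subsingleton.elim _ _⟩, isEmptyElim⟩
  obtain ⟨p, hp, hπp⟩ :=
    hu.completeOrthogonalIdempotents.lift_of_isNilpotent_ker (π : B →+* C) hnil fun _ => hπ _
  have hπp' (i : ι) : π (p i) = u i i := congr_fun hπp i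
  choose x y hpx hxp hyp hyx hπx hπy using fun i =>
    exists_lift_of_mul_eq π hπ hnil (hp.idem z) (hp.idem i) (v := u i z) (w := u z i)
      (by simp [hπp', hu.mul_eq]) (by simp [hπp', hu.mul_eq]) (by simp [hπp', hu.mul_eq])
  have hyx' (j k : ι) : y j * x k = if j = k then p z else 0 := by
    split_ifs with h
    · exact h ▸ hyx j
    · rw [← hyp, ← hpx, mul_assoc, ← mul_assoc (p j), hp.ortho h, zero_mul, mul_zero]
  have hxy (i : ι) : x i * y i = p i := by
    refine eq_of_isNilpotent_sub_of_isIdempotentElem_of_commute ?_ (hp.idem i) (hnil _ ?_) ?_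
    · rw [IsIdempotentElem, mul_assoc, ← mul_assoc (y i), hyx, ← mul_assoc, hxp]
    · simp [RingHom.mem_ker, hπx, hπy, hπp', hu.mul_eq]
    · rw [Commute, SemiconjBy, mul_assoc, hyp, ← mul_assoc, hpx]
  refine ⟨_, of_mul hyx' hxp (by simp [hxy, hp.complete]), fun i j => ?_⟩
  simp [hπx, hπy, hu.mul_eq]

end Lift

section Algebra

variable {R A B C : Type*} [CommSemiring R] [Semiring A] [Semiring B] [Semiring C]
  [Algebra R A] [Algebra R B] [Algebra R C] {e : ι → ι → B}

theorem surjective_restrictCentralizer (he : IsMatrixUnits e) {π : B →ₐ[R] C}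
    (hπ : Surjective π) : Surjective (π.restrictCentralizer (Set.range (uncurry e))) := by
  rintro ⟨c, hc⟩
  obtain ⟨b, rfl⟩ := hπ c
  rcases isEmpty_or_nonempty ι with hι | ⟨⟨z⟩⟩
  · exact ⟨⟨b, by rintro _ ⟨⟨i, _⟩, _⟩; exact isEmptyElim i⟩, rfl⟩
  have hmem : ∑ k, e k z * b * e z k ∈ Subalgebra.centralizer R (Set.range (uncurry e)) := by
    rintro _ ⟨⟨i, j⟩, rfl⟩
    exact (he.commute_sum_mul_mul z b i j).eq
  refine ⟨⟨_, hmem⟩, Subtype.ext ?_⟩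
  change π (∑ k, e k z * b * e z k) = π b
  simp only [map_sum, map_mul]
  exact (he.map π).sum_mul_mul_of_commute z fun i j => hc _ ⟨e i j, ⟨(i, j), rfl⟩, rfl⟩

def liftAlgHom (he : IsMatrixUnits e) (φ : A →ₐ[R] B) (hφ : ∀ a i j, Commute (φ a) (e i j)) :
    Matrix ι ι A →ₐ[R] B :=
  AlgHom.ofLinearMap
    (∑ i, ∑ j, LinearMap.mulRight R (e i j) ∘ₗ φ.toLinearMap ∘ₗ Matrix.entryLinearMap R A i j)
    (by simp [Matrix.one_apply, he.sum_eq_one])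
    (fun X Y => by
      simp only [LinearMap.coe_sum, LinearMap.coe_comp, AlgHom.coe_toLinearMap, Finset.sum_apply,
        comp_apply, Matrix.entryLinearMap_apply, Matrix.mul_apply, map_sum, map_mul,
        LinearMap.mulRight_apply, Finset.mul_sum, Finset.sum_mul,
        he.mul_mul_mul_of_commute _ (hφ _), Finset.sum_ite_eq', Finset.mem_univ, ↓reduceIte]
      rw [Finset.sum_comm_cycle]
      exact Finset.sum_congr rfl fun _ _ => Finset.sum_comm)

theorem liftAlgHom_apply (he : IsMatrixUnits e) (φ : A →ₐ[R] B)
    (hφ : ∀ a i j, Commute (φ a) (e i j)) (X : Matrix ι ι A) :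
    he.liftAlgHom φ hφ X = ∑ i, ∑ j, φ (X i j) * e i j := by
  simp [liftAlgHom]

end Algebra

end IsMatrixUnits

end MatrixUnits

open Matrix in
/-- if a ℂ-algebra A is quasi-free (formally smooth), i.e. has the lifting
property for algebra morphisms modulo nilpotent ideals — presented via surjections
π : B → C of ℂ-algebras with nilpotent kernel — then so does the matrix algebra Mₙ(A). -/
theorem matrix_algebra_formally_smooth (A : Type) [Ring A] [Algebra ℂ A]
    (hA : ∀ (B C : Type) [Ring B] [Algebra ℂ B] [Ring C] [Algebra ℂ C] (π : B →ₐ[ℂ] C),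
      Function.Surjective π →
      (∃ m : ℕ, ∀ x : Fin m → B, (∀ i, π (x i) = 0) → (List.ofFn x).prod = 0) →
      ∀ f : A →ₐ[ℂ] C, ∃ g : A →ₐ[ℂ] B, π.comp g = f)
    (n : ℕ) :
    ∀ (B C : Type) [Ring B] [Algebra ℂ B] [Ring C] [Algebra ℂ C] (π : B →ₐ[ℂ] C),
      Function.Surjective π →
      (∃ m : ℕ, ∀ x : Fin m → B, (∀ i, π (x i) = 0) → (List.ofFn x).prod = 0) →
      ∀ f : Matrix (Fin n) (Fin n) A →ₐ[ℂ] C,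
        ∃ g : Matrix (Fin n) (Fin n) A →ₐ[ℂ] B, π.comp g = f := by
  intro B C _ _ _ _ π hπ hker f
  obtain ⟨e, he, hπe⟩ :=
    ((isMatrixUnits_single A).map f).exists_lift π hπ (HasNilpotentKer.isNilpotent hker)
  set s := Set.range (uncurry e)
  have hscalar (a : A) : f (scalar (Fin n) a) ∈ Subalgebra.centralizer ℂ (π '' s) := by
    rintro _ ⟨_, ⟨⟨i, j⟩, rfl⟩, rfl⟩
    exact (hπe i j ▸ (mem_range_scalar_iff_commute_single'.mp ⟨a, rfl⟩ i j).map f).eq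
  obtain ⟨g₀, hg₀⟩ := hA _ _ (π.restrictCentralizer s) (he.surjective_restrictCentralizer hπ)
    (HasNilpotentKer.codRestrict hker _ _ _)
    ((f.comp (scalarAlgHom (Fin n) ℂ)).codRestrict _ hscalar)
  have hcomm (a : A) (i j : Fin n) :
      Commute ((Subalgebra.centralizer ℂ s).val.comp g₀ a) (e i j) :=
    ((Subalgebra.mem_centralizer_iff ℂ).mp (g₀ a).2 _ ⟨(i, j), rfl⟩).symm
  refine ⟨he.liftAlgHom _ hcomm, AlgHom.ext fun X => ?_⟩
  have hπg₀ (a : A) : π (g₀ a) = f (scalar (Fin n) a) :=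
    congrArg Subtype.val (AlgHom.congr_fun hg₀ a)
  rw [AlgHom.comp_apply, he.liftAlgHom_apply, map_eq_sum_scalar_mul_single f X]
  simp [hπg₀, hπe]
end

section
/- Let Q be a finite quiver, θ ∈ ℤ^k, and let M be a θ-semistable representation. Then M has a Jordan–Hölder filtration 0 = M_0 ⊂ M_1 ⊂ … ⊂ M_r = M by subrepresentations such that each quotient M_t/M_{t−1} is θ-stable with θ(M_t) = 0 for all t. -/
/-!
Ordered by inclusion, the subrepresentations of a finite-dimensional representation satisfy both
chain conditions, and so does the subposet of those of θ-value zero. Hence the bottom and top of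
that subposet are joined by a finite chain in which each step is a covering. For a covering step
`A ⋖ B`, every subrepresentation between `A` and `B` of θ-value zero is `A` or `B`, while
semistability of `M` makes every θ-value nonnegative: this is θ-stability of `B / A`.
-/

open Quiver

variable {V : Type} [Quiver.{1} V]

namespace SubRep

variable {M : QRep V}

theorem N_injective : Function.Injective (N : SubRep M → ∀ i, Submodule ℂ (M.carrier i)) := by
  rintro ⟨N, _⟩ ⟨N', _⟩ rfl
  rfl

instance : PartialOrder (SubRep M) := PartialOrder.lift N N_injective

theorem N_strictMono : StrictMono (N : SubRep M → ∀ i, Submodule ℂ (M.carrier i)) :=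
  fun _ _ h => h

theorem exists_N_ne_of_lt {A B : SubRep M} (h : A < B) : ∃ i, A.N i ≠ B.N i :=
  Function.ne_iff.mp (N_strictMono h).ne

instance : OrderBot (SubRep M) where
  bot := ⟨fun _ => ⊥, fun _ x hx => by simp [(Submodule.mem_bot ℂ).1 hx]⟩
  bot_le _ _ := bot_le

instance : OrderTop (SubRep M) where
  top := ⟨fun _ => ⊤, fun _ _ _ => Submodule.mem_top⟩
  le_top _ _ := le_top

@[simp] theorem bot_N (i : V) : (⊥ : SubRep M).N i = ⊥ := rfl

@[simp] theorem top_N (i : V) : (⊤ : SubRep M).N i = ⊤ := rfl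

instance [Finite V] [∀ i, FiniteDimensional ℂ (M.carrier i)] : WellFoundedLT (SubRep M) :=
  N_strictMono.wellFoundedLT

-- There is no `Pi.wellFoundedGT`, so pass to the componentwise order dual.
instance [Finite V] [∀ i, FiniteDimensional ℂ (M.carrier i)] : WellFoundedGT (SubRep M) :=
  StrictAnti.wellFoundedGT (f := fun (A : SubRep M) i => OrderDual.toDual (A.N i)) fun _ _ h => h

variable [Fintype V] (θ : V → ℤ)

@[simp] theorem θnum_bot : (⊥ : SubRep M).θnum θ = 0 := by
  simp [SubRep.θnum]

@[simp] theorem θnum_top : (⊤ : SubRep M).θnum θ = M.θnum θ := by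
  simp [SubRep.θnum, QRep.θnum]

end SubRep

/-- every θ-semistable representation M admits a Jordan–Hölder filtration
0 = M₀ ⊂ M₁ ⊂ … ⊂ M_r = M by subrepresentations with θ(M_t) = 0 for all t and all
successive quotients M_t/M_{t-1} θ-stable (expressed via the lattice of subrepresentations
between M_{t-1} and M_t: the quotient is nonzero, intermediate subrepresentations have
nonnegative θ-value, and θ-value 0 occurs only at the two endpoints). -/
theorem semistable_has_jordan_holder_filtration [Fintype V] (θ : V → ℤ) (M : QRep V)
    (hMfd : ∀ i, FiniteDimensional ℂ (M.carrier i))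
    (hM : M.Semistable θ) :
    ∃ (r : ℕ) (F : Fin (r + 1) → SubRep M),
      (∀ i, (F 0).N i = ⊥) ∧
      (∀ i, (F (Fin.last r)).N i = ⊤) ∧
      (∀ (t : Fin r) (i : V), (F t.castSucc).N i ≤ (F t.succ).N i) ∧
      (∀ t : Fin (r + 1), (F t).θnum θ = 0) ∧
      (∀ t : Fin r,
        (∃ i, (F t.castSucc).N i ≠ (F t.succ).N i) ∧
        ∀ N : SubRep M, (∀ i, (F t.castSucc).N i ≤ N.N i ∧ N.N i ≤ (F t.succ).N i) →
          0 ≤ N.θnum θ ∧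
            (N.θnum θ = 0 →
              (∀ i, N.N i = (F t.castSucc).N i) ∨ (∀ i, N.N i = (F t.succ).N i))) := by
  let Z := {N : SubRep M // N.θnum θ = 0}
  have htop : (⊤ : SubRep M).θnum θ = 0 := (SubRep.θnum_top θ).trans hM.1
  obtain ⟨a, ha0, r, har, hcov⟩ := exists_covBy_seq_of_wellFoundedLT_wellFoundedGT_of_le
    (Subtype.mk_le_mk.2 bot_le : (⟨⊥, SubRep.θnum_bot θ⟩ : Z) ≤ ⟨⊤, htop⟩)
  have hstep (t : Fin r) : a t.castSucc ⋖ a t.succ := by simpa using hcov t t.isLt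
  refine ⟨r, fun t => (a t).1, fun i => by simp [ha0], fun i => by simp [har],
    fun t => (hstep t).le, fun t => (a t).2, fun t => ⟨SubRep.exists_N_ne_of_lt (hstep t).lt,
      fun N hN => ⟨hM.2 N, fun hN0 => ?_⟩⟩⟩
  obtain h | h := (hstep t).eq_or_eq (c := ⟨N, hN0⟩) (fun i => (hN i).1) (fun i => (hN i).2)
  · exact .inl (congrFun (congrArg (·.1.N) h))
  · exact .inr (congrFun (congrArg (·.1.N) h))
end

section
/- Let Q be a finite quiver without oriented cycles. Then the path algebra ℂQ has the lifting property for algebra morphisms modulo nilpotent ideals: for every ℂ-algebra B with nilpotent two-sided ideal I and every ℂ-algebra homomorphism f : ℂQ → B/I, there exists a ℂ-algebra homomorphism g : ℂQ → B with π ∘ g = f, where π : B → B/I is the quotient map. -/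
open Quiver

section PathAlgebra

/- We axiomatize the path algebra ℂQ of a quiver: an associative ℂ-algebra `A` with a
ℂ-basis indexed by the oriented paths of `Q`, in which the product of two basis elements
is the concatenated path when the paths are composable and `0` otherwise.  (Multiplication
is written so that for `p : Path a b` and `q : Path b c` the product of the basis element
of `q` with that of `p` is the basis element of `p.comp q`, i.e. paths act by left
concatenation.)  These hypotheses determine `A` up to isomorphism, so any theorem stated
with them is a theorem about the path algebra. -/
variable {V : Type} [Quiver.{1} V]
variable (A : Type) [Ring A] [Algebra ℂ A]
variable (b : Module.Basis (Σ a c : V, Quiver.Path a c) ℂ A)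

def IsPathAlgebraBasis : Prop :=
  (∀ (x y z : V) (p : Quiver.Path x y) (q : Quiver.Path y z),
      b ⟨y, z, q⟩ * b ⟨x, y, p⟩ = b ⟨x, z, p.comp q⟩) ∧
  (∀ (x y x' z : V) (p : Quiver.Path x y) (q : Quiver.Path x' z),
      x' ≠ y → b ⟨x', z, q⟩ * b ⟨x, y, p⟩ = 0)

/-- The idempotent of the vertex `i` : the length-zero path at `i`. -/
noncomputable def vertexIdem (i : V) : A := b ⟨i, i, Quiver.Path.nil⟩

/-- The indecomposable projective left ideal `P i = (ℂQ)·e_i`. -/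
noncomputable def vertexProj (i : V) : Submodule A A := Submodule.span A {vertexIdem A b i}

end PathAlgebra

/-! The vertex idempotents of `A` form a complete orthogonal system; its image under `f` lifts
along the nilpotent kernel of `π` to a complete orthogonal system `ε` in `B`. The image of an
arrow `i ⟶ j` lies in `f(e_j) C`, so it has a preimage in `ε_j B`. Sending each path to the product
of the chosen arrow preimages is multiplicative because `A` is spanned by paths with
concatenation as product, and this algebra map is a lift of `f` since both agree on paths. -/

theorem isNilpotent_of_forall_ofFn_prod_eq_zero {M : Type*} [MonoidWithZero M] {P : M → Prop}
    (h : ∃ m, ∀ x : Fin m → M, (∀ i, P (x i)) → (List.ofFn x).prod = 0) {x : M} (hx : P x) :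
    IsNilpotent x := by
  obtain ⟨m, hm⟩ := h
  refine ⟨m, ?_⟩
  simpa [List.ofFn_const, List.prod_replicate] using hm (fun _ => x) (fun _ => hx)

theorem Function.Surjective.exists_idem_mul_preimage {B C F : Type*} [Semigroup B] [Mul C]
    [FunLike F B C] [MulHomClass F B C] {π : F} (hπ : Function.Surjective π) {u : B}
    (hu : IsIdempotentElem u) {c : C} (hc : π u * c = c) : ∃ y, u * y = y ∧ π y = c := by
  obtain ⟨y, rfl⟩ := hπ c
  exact ⟨u * y, by rw [← mul_assoc, hu.eq], by rw [map_mul, hc]⟩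

section PathProd

variable {V : Type*} [Quiver V] {B : Type*} [Semiring B]

def pathProd (ε : V → B) (L : ∀ ⦃i j : V⦄, (i ⟶ j) → B) : ∀ {x y : V}, Path x y → B
  | x, _, .nil => ε x
  | _, _, .cons p α => L α * pathProd ε L p

variable (ε : V → B) (L : ∀ ⦃i j : V⦄, (i ⟶ j) → B)

@[simp] theorem pathProd_nil (x : V) : pathProd ε L (Path.nil : Path x x) = ε x := by
  rw [pathProd]

@[simp] theorem pathProd_cons {x y z : V} (p : Path x y) (α : y ⟶ z) :
    pathProd ε L (p.cons α) = L α * pathProd ε L p := by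
  rw [pathProd]

theorem map_pathProd {C F : Type*} [Semiring C] [FunLike F B C] [MulHomClass F B C] (φ : F)
    {x y : V} (p : Path x y) :
    φ (pathProd ε L p) = pathProd (fun i => φ (ε i)) (fun _ _ α => φ (L α)) p := by
  induction p with
  | nil => simp only [pathProd_nil]
  | cons p α ih => rw [pathProd_cons, map_mul, ih, pathProd_cons]

variable {ε L}

theorem idem_mul_pathProd (hε : ∀ i, IsIdempotentElem (ε i))
    (hL : ∀ ⦃i j : V⦄ (α : i ⟶ j), ε j * L α = L α) {x y : V} (p : Path x y) :
    ε y * pathProd ε L p = pathProd ε L p := by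
  cases p with
  | nil => exact (pathProd_nil ε L x).symm ▸ (hε x).eq
  | cons p α => rw [pathProd_cons, ← mul_assoc, hL]

theorem pathProd_mul_idem (hε : ∀ i, IsIdempotentElem (ε i)) {x y : V} (p : Path x y) :
    pathProd ε L p * ε x = pathProd ε L p := by
  induction p with
  | nil => exact (pathProd_nil ε L x).symm ▸ (hε x).eq
  | cons p α ih => rw [pathProd_cons, mul_assoc, ih]

theorem pathProd_mul_pathProd (hε : ∀ i, IsIdempotentElem (ε i))
    (hL : ∀ ⦃i j : V⦄ (α : i ⟶ j), ε j * L α = L α) {x y z : V} (p : Path x y)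
    (q : Path y z) : pathProd ε L q * pathProd ε L p = pathProd ε L (p.comp q) := by
  induction q with
  | nil => rw [Path.comp_nil, pathProd_nil, idem_mul_pathProd hε hL p]
  | cons q α ih => rw [Path.comp_cons, pathProd_cons, pathProd_cons, mul_assoc, ih]

theorem pathProd_mul_pathProd_of_ne (hε : OrthogonalIdempotents ε)
    (hL : ∀ ⦃i j : V⦄ (α : i ⟶ j), ε j * L α = L α) {x y x' z : V} (h : x' ≠ y)
    (p : Path x y) (q : Path x' z) : pathProd ε L q * pathProd ε L p = 0 := by
  rw [← pathProd_mul_idem hε.idem q, ← idem_mul_pathProd hε.idem hL p, mul_assoc,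
    ← mul_assoc (ε x'), hε.ortho h, zero_mul, mul_zero]

end PathProd

namespace IsPathAlgebraBasis

variable {V : Type} [Quiver.{1} V] {A : Type} [Ring A] [Algebra ℂ A]
  {b : Module.Basis (Σ a c : V, Path a c) ℂ A}

theorem vertexIdem_mul_basis (hb : IsPathAlgebraBasis A b) {x y : V} (p : Path x y) :
    vertexIdem A b y * b ⟨x, y, p⟩ = b ⟨x, y, p⟩ := by
  rw [vertexIdem, hb.1, Path.comp_nil]

theorem sum_vertexIdem [Fintype V] (hb : IsPathAlgebraBasis A b) :
    ∑ i, vertexIdem A b i = 1 := by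
  have hmul : LinearMap.mulLeft ℂ (∑ i, vertexIdem A b i) = LinearMap.id := by
    refine b.ext fun ⟨x, y, p⟩ => ?_
    rw [LinearMap.mulLeft_apply, LinearMap.id_apply, Finset.sum_mul,
      Finset.sum_eq_single_of_mem y (Finset.mem_univ y) fun i _ hi => ?_]
    · exact hb.vertexIdem_mul_basis p
    · exact hb.2 _ _ _ _ _ _ hi
  simpa using LinearMap.congr_fun hmul 1

theorem completeOrthogonalIdempotents_vertexIdem [Fintype V] (hb : IsPathAlgebraBasis A b) :
    CompleteOrthogonalIdempotents (vertexIdem A b) where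
  idem _ := hb.vertexIdem_mul_basis Path.nil
  ortho _ _ h := hb.2 _ _ _ _ _ _ h
  complete := hb.sum_vertexIdem

theorem pathProd_basis (hb : IsPathAlgebraBasis A b) {x y : V} (p : Path x y) :
    pathProd (vertexIdem A b) (fun i j α => b ⟨i, j, α.toPath⟩) p = b ⟨x, y, p⟩ := by
  induction p with
  | nil => rw [pathProd_nil, vertexIdem]
  | cons p α ih => rw [pathProd_cons, ih, hb.1, Path.comp_toPath_eq_cons]

theorem algHom_apply_basis (hb : IsPathAlgebraBasis A b) {C : Type*} [Ring C] [Algebra ℂ C]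
    (f : A →ₐ[ℂ] C) {x y : V} (p : Path x y) :
    f (b ⟨x, y, p⟩) =
      pathProd (fun i => f (vertexIdem A b i)) (fun i j α => f (b ⟨i, j, α.toPath⟩)) p := by
  rw [← hb.pathProd_basis p, map_pathProd]

variable [Fintype V] {B : Type*} [Ring B] [Algebra ℂ B] {ε : V → B}
  {L : ∀ ⦃i j : V⦄, (i ⟶ j) → B}

/-- A path ends with the idempotent of its source on the right, so only the left condition
`ε j * L α = L α` is needed for multiplicativity. -/
noncomputable def lift (hb : IsPathAlgebraBasis A b) (hε : CompleteOrthogonalIdempotents ε)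
    (hL : ∀ ⦃i j : V⦄ (α : i ⟶ j), ε j * L α = L α) : A →ₐ[ℂ] B :=
  AlgHom.ofLinearMap (b.constr ℂ fun s => pathProd ε L s.2.2)
    (by
      rw [← hb.sum_vertexIdem, map_sum, ← hε.complete]
      exact Finset.sum_congr rfl fun i _ => (b.constr_basis ℂ _ _).trans (pathProd_nil ε L i))
    (by
      rw [LinearMap.map_mul_iff]
      refine b.ext fun ⟨x', z, q⟩ => b.ext fun ⟨x, y, p⟩ => ?_
      simp only [LinearMap.compr₂_apply, LinearMap.mul_apply', LinearMap.compl₂_apply,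
        LinearMap.comp_apply, Module.Basis.constr_basis]
      by_cases h : x' = y
      · subst h
        rw [hb.1, Module.Basis.constr_basis, pathProd_mul_pathProd hε.idem hL]
      · rw [hb.2 _ _ _ _ _ _ h, map_zero,
          pathProd_mul_pathProd_of_ne hε.toOrthogonalIdempotents hL h])

@[simp] theorem lift_basis (hb : IsPathAlgebraBasis A b) (hε : CompleteOrthogonalIdempotents ε)
    (hL : ∀ ⦃i j : V⦄ (α : i ⟶ j), ε j * L α = L α) {x y : V} (p : Path x y) :
    hb.lift hε hL (b ⟨x, y, p⟩) = pathProd ε L p :=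
  b.constr_basis ℂ _ _

end IsPathAlgebraBasis

/-- the path algebra ℂQ of a finite quiver without oriented cycles is
quasi-free (formally smooth): any ℂ-algebra morphism from ℂQ to a quotient of a
ℂ-algebra B by a nilpotent two-sided ideal (presented as a surjection π : B → C whose
kernel is nilpotent) lifts to B. -/
theorem path_algebra_formally_smooth {V : Type} [Quiver.{1} V] [Fintype V]
    [∀ i j : V, Fintype (i ⟶ j)]
    (hacyclic : ∀ (v : V) (p : Quiver.Path v v), p.length = 0)
    (A : Type) [Ring A] [Algebra ℂ A] (b : Module.Basis (Σ a c : V, Quiver.Path a c) ℂ A)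
    (hb : IsPathAlgebraBasis A b) :
    ∀ (B C : Type) [Ring B] [Algebra ℂ B] [Ring C] [Algebra ℂ C] (π : B →ₐ[ℂ] C),
      Function.Surjective π →
      (∃ mExp : ℕ, ∀ x : Fin mExp → B, (∀ i, π (x i) = 0) → (List.ofFn x).prod = 0) →
      ∀ f : A →ₐ[ℂ] C, ∃ g : A →ₐ[ℂ] B, π.comp g = f := by
  intro B C _ _ _ _ π hπ hnil f
  obtain ⟨ε, hε, hπε⟩ := (hb.completeOrthogonalIdempotents_vertexIdem.map f.toRingHom)
    |>.lift_of_isNilpotent_ker (π : B →+* C)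
      (fun _ hx => isNilpotent_of_forall_ofFn_prod_eq_zero hnil hx) (fun _ => hπ _)
  have hπε_apply (i : V) : π (ε i) = f (vertexIdem A b i) := congr_fun hπε i
  choose L hL hπL using fun i j (α : i ⟶ j) =>
    hπ.exists_idem_mul_preimage (hε.idem j) (c := f (b ⟨i, j, α.toPath⟩)) (by
      rw [hπε_apply, ← map_mul, hb.vertexIdem_mul_basis])
  refine ⟨hb.lift hε (L := fun i j α => L i j α) fun _ _ => hL _ _, ?_⟩
  refine AlgHom.toLinearMap_injective (b.ext fun ⟨x, y, p⟩ => ?_)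
  simp only [AlgHom.comp_toLinearMap, LinearMap.comp_apply, AlgHom.toLinearMap_apply,
    IsPathAlgebraBasis.lift_basis, map_pathProd, hπε_apply, hπL, hb.algHom_apply_basis f p]
end
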